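/- (Proposition 1.) Let d ≥ 3, let Θ = (θ_0, …, θ_{d-1}) and Λ = (λ_0, …, λ_{d-1}) be d-tuples of complex numbers of modulus 1, and set Z_Θ = ∑_{k=0}^{d-1} θ_k·conj(θ_{k+1})·|k+1⟩⟨k| and Z_Λ = ∑_{k=0}^{d-1} λ_k·conj(λ_{k+1})·|k+1⟩⟨k| (indices modulo d). Fix i with 1 ≤ i ≤ d-2 and put j = d-1-i. Define γ_k = (∏_{m=0}^{d-i-1} θ_{k+m}) · (∏_{m=0}^{i} λ_{k-i+m}) for k = 0, …, d-1 (indices modulo d). Then Z_Θ^i · Z_Λ^j = ∑_{k=0}^{d-1} γ_{k+1} · conj(γ_k) · |k⟩⟨k+1|, i.e. the product observable equals Z_Γ†, the conjugate transpose of Z_Γ := ∑_{k=0}^{d-1} γ_k·conj(γ_{k+1})·|k+1⟩⟨k|, for Γ = (γ_0, …, γ_{d-1}). -/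

import Mathlib

open Matrix
open Fin.NatCast
open Fin.CommRing

section helpers
variable {d : ℕ} [NeZero d]

lemma unit_mul_conj {z : ℂ} (h : ‖z‖ = 1) : z * (starRingEnd ℂ) z = 1 := by
  rw [Complex.mul_conj, Complex.normSq_eq_norm_sq, h]
  norm_num

lemma sumA (c : Fin d) (f : Fin d → ℂ) (a b : Fin d) :
    (∑ k : Fin d, Matrix.single (k + c) k (f k)) a b
      = if a = b + c then f b else 0 := by
  rw [Matrix.sum_apply]
  rw [Finset.sum_eq_single b]
  · simp [Matrix.single, eq_comm]
  · intro k _ hk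
    simp only [Matrix.single, Matrix.of_apply, ite_eq_right_iff, and_imp]
    exact fun _ h => absurd h hk
  · simp

lemma sumB (f : Fin d → ℂ) (a b : Fin d) :
    (∑ k : Fin d, Matrix.single k (k + 1) (f k)) a b
      = if b = a + 1 then f a else 0 := by
  rw [Matrix.sum_apply]
  rw [Finset.sum_eq_single a]
  · simp [Matrix.single, eq_comm]
  · intro k _ hk
    simp only [Matrix.single, Matrix.of_apply, ite_eq_right_iff, and_imp]
    first
    | exact fun h _ => absurd h hk
    | exact fun h _ => absurd h.symm hk
  · simp

lemma shift_pow (f : Fin d → ℂ) (n : ℕ) :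
    (∑ k : Fin d, Matrix.single (k + 1) k (f k)) ^ n
      = ∑ k : Fin d, Matrix.single (k + (n : Fin d)) k
          (∏ m ∈ Finset.range n, f (k + (m : Fin d))) := by
  induction n with
  | zero =>
    ext a b
    rw [pow_zero, sumA]
    simp [Matrix.one_apply, eq_comm]
  | succ n ih =>
    rw [pow_succ, ih]
    ext a b
    rw [Matrix.mul_apply, sumA]
    rw [Finset.sum_eq_single (b + 1)]
    · rw [sumA, sumA, if_pos rfl]
      have hcast : ((n+1:ℕ) : Fin d) = (n : Fin d) + 1 := by push_cast; ring
      have hcond : (a = b + 1 + (n : Fin d)) ↔ (a = b + ((n+1:ℕ) : Fin d)) := by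
        rw [hcast]; constructor <;> intro h <;> rw [h] <;> ring
      by_cases h : a = b + ((n+1:ℕ) : Fin d)
      · rw [if_pos (hcond.mpr h), if_pos h]
        rw [Finset.prod_range_succ']
        congr 1
        · apply Finset.prod_congr rfl
          intro m _
          congr 1
          push_cast
          ring
        · simp
      · rw [if_neg (fun hc => h (hcond.mp hc)), if_neg h, zero_mul]
    · intro c _ hc
      rw [sumA, sumA, if_neg hc, mul_zero]
    · simp

lemma telescope (f : Fin d → ℂ) (hf : ∀ k, ‖f k‖ = 1) (n : ℕ) (k : Fin d) :
    ∏ m ∈ Finset.range n, (f (k + (m : Fin d)) * (starRingEnd ℂ) (f (k + (m : Fin d) + 1)))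
      = f k * (starRingEnd ℂ) (f (k + (n : Fin d))) := by
  induction n with
  | zero =>
    simp only [Finset.prod_range_zero, Nat.cast_zero, add_zero]
    exact (unit_mul_conj (hf k)).symm
  | succ n ih =>
    rw [Finset.prod_range_succ, ih]
    have hcast : ((n+1:ℕ) : Fin d) = (n : Fin d) + 1 := by push_cast; ring
    rw [hcast, show k + ((n : Fin d) + 1) = k + (n : Fin d) + 1 from by ring]
    have h1 : (starRingEnd ℂ) (f (k + (n:Fin d))) * f (k + (n:Fin d)) = 1 := by
      rw [mul_comm]; exact unit_mul_conj (hf _)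
    calc f k * (starRingEnd ℂ) (f (k + (n:Fin d)))
          * (f (k + (n:Fin d)) * (starRingEnd ℂ) (f (k + (n:Fin d) + 1)))
        = f k * ((starRingEnd ℂ) (f (k + (n:Fin d))) * f (k + (n:Fin d)))
            * (starRingEnd ℂ) (f (k + (n:Fin d) + 1)) := by ring
      _ = f k * (starRingEnd ℂ) (f (k + (n:Fin d) + 1)) := by rw [h1, mul_one]

lemma ratio (f : Fin d → ℂ) (hf : ∀ k, ‖f k‖ = 1) (n : ℕ) (k : Fin d) :
    (∏ m ∈ Finset.range n, f (k + 1 + (m : Fin d)))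
      * (starRingEnd ℂ) (∏ m ∈ Finset.range n, f (k + (m : Fin d)))
      = f (k + (n : Fin d)) * (starRingEnd ℂ) (f k) := by
  induction n with
  | zero =>
    simp only [Finset.prod_range_zero, Nat.cast_zero, add_zero]
    simp only [RingHom.map_one, one_mul, mul_one]
    exact (unit_mul_conj (hf k)).symm
  | succ n ih =>
    have hP : (∏ m ∈ Finset.range n, f (k + 1 + (m : Fin d)))
        * (starRingEnd ℂ) (∏ m ∈ Finset.range n, f (k + 1 + (m : Fin d))) = 1 := by
      apply unit_mul_conj
      rw [norm_prod]
      exact Finset.prod_eq_one (fun m _ => hf _)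
    have h1 : ∏ m ∈ Finset.range (n+1), f (k + (m : Fin d))
        = (∏ m ∈ Finset.range n, f (k + 1 + (m : Fin d))) * f k := by
      rw [Finset.prod_range_succ']
      congr 1
      · apply Finset.prod_congr rfl
        intro m _
        congr 1
        push_cast
        ring
      · simp
    rw [Finset.prod_range_succ, h1, _root_.map_mul]
    have hcast : ((n+1:ℕ) : Fin d) = (n : Fin d) + 1 := by push_cast; ring
    rw [hcast]
    calc (∏ m ∈ Finset.range n, f (k + 1 + (m : Fin d))) * f (k + 1 + (n:Fin d))
          * ((starRingEnd ℂ) (∏ m ∈ Finset.range n, f (k + 1 + (m : Fin d)))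
            * (starRingEnd ℂ) (f k))
        = ((∏ m ∈ Finset.range n, f (k + 1 + (m : Fin d)))
            * (starRingEnd ℂ) (∏ m ∈ Finset.range n, f (k + 1 + (m : Fin d))))
          * (f (k + 1 + (n:Fin d)) * (starRingEnd ℂ) (f k)) := by ring
      _ = f (k + ((n : Fin d) + 1)) * (starRingEnd ℂ) (f k) := by
          rw [hP, one_mul]
          congr 2
          ring

end helpers

/-- **Proposition 1.** For `d ≥ 3`, unit-modulus tuples `θ` and `λ`,
`Z_Θ = ∑_k θ_k·conj(θ_{k+1})·|k+1⟩⟨k|`, `Z_Λ = ∑_k λ_k·conj(λ_{k+1})·|k+1⟩⟨k|`,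
`1 ≤ i ≤ d-2`, `j = d-1-i`, and
`γ_k = (∏_{m=0}^{d-i-1} θ_{k+m}) · (∏_{m=0}^{i} λ_{k-i+m})` (indices modulo `d`), one has
`Z_Θ^i · Z_Λ^j = ∑_k γ_{k+1}·conj(γ_k)·|k⟩⟨k+1| = Z_Γᴴ` where
`Z_Γ = ∑_k γ_k·conj(γ_{k+1})·|k+1⟩⟨k|`. -/
theorem stmt6 (d : ℕ) (hd : 3 ≤ d) [NeZero d]
    (θ lam : Fin d → ℂ)
    (hθ : ∀ k, ‖θ k‖ = 1) (hlam : ∀ k, ‖lam k‖ = 1)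
    (ZΘ ZΛ : Matrix (Fin d) (Fin d) ℂ)
    (hZΘ : ZΘ = ∑ k : Fin d,
      Matrix.single (k + 1) k (θ k * (starRingEnd ℂ) (θ (k + 1))))
    (hZΛ : ZΛ = ∑ k : Fin d,
      Matrix.single (k + 1) k (lam k * (starRingEnd ℂ) (lam (k + 1))))
    (i j : ℕ) (hi1 : 1 ≤ i) (hi2 : i ≤ d - 2) (hj : j = d - 1 - i)
    (γ : Fin d → ℂ)
    (hγ : ∀ k : Fin d, γ k =
      (∏ m ∈ Finset.range (d - i), θ (k + (m : Fin d)))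
        * (∏ m ∈ Finset.range (i + 1), lam (k - (i : Fin d) + (m : Fin d))))
    (ZΓ : Matrix (Fin d) (Fin d) ℂ)
    (hZΓ : ZΓ = ∑ k : Fin d,
      Matrix.single (k + 1) k (γ k * (starRingEnd ℂ) (γ (k + 1)))) :
    ZΘ ^ i * ZΛ ^ j
        = ∑ k : Fin d,
            Matrix.single k (k + 1) (γ (k + 1) * (starRingEnd ℂ) (γ k))
      ∧ ZΘ ^ i * ZΛ ^ j = ZΓᴴ := by
  have hd0 : ((d : ℕ) : Fin d) = 0 := by
    exact_mod_cast Fin.natCast_self d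
  have hid : i ≤ d := by omega
  have hd1 : (((d - 1 : ℕ)) : Fin d) = -1 := by
    rw [Nat.cast_sub (by omega : 1 ≤ d), hd0]
    simp
  have hdi : (((d - i : ℕ)) : Fin d) = -(i : Fin d) := by
    rw [Nat.cast_sub hid, hd0]
    ring
  have hjc : ((j : ℕ) : Fin d) = -1 - (i : Fin d) := by
    rw [hj, Nat.cast_sub (by omega : i ≤ d - 1), hd1]
  -- the coefficient identity
  have key : ∀ a : Fin d,
      (∏ m ∈ Finset.range i,
          (θ (a + 1 + (j : Fin d) + (m : Fin d))
            * (starRingEnd ℂ) (θ (a + 1 + (j : Fin d) + (m : Fin d) + 1))))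
        * (∏ m ∈ Finset.range j,
          (lam (a + 1 + (m : Fin d))
            * (starRingEnd ℂ) (lam (a + 1 + (m : Fin d) + 1))))
      = γ (a + 1) * (starRingEnd ℂ) (γ a) := by
    intro a
    rw [telescope θ hθ i, telescope lam hlam j]
    have e1 : a + 1 + (j : Fin d) = a - (i : Fin d) := by rw [hjc]; ring
    rw [e1]
    rw [show a - (i : Fin d) + (i : Fin d) = a from by ring]
    have hγ1 : γ (a + 1) =
        (∏ m ∈ Finset.range (d - i), θ (a + 1 + (m : Fin d)))
          * (∏ m ∈ Finset.range (i + 1), lam (a - (i : Fin d) + 1 + (m : Fin d))) := by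
      rw [hγ (a + 1)]
      congr 1
      apply Finset.prod_congr rfl
      intro m _
      congr 1
      ring
    rw [hγ1, hγ a, _root_.map_mul]
    have rθ := ratio θ hθ (d - i) a
    have rl := ratio lam hlam (i + 1) (a - (i : Fin d))
    calc θ (a - (i : Fin d)) * (starRingEnd ℂ) (θ a)
            * (lam (a + 1) * (starRingEnd ℂ) (lam (a - (i : Fin d))))
        = (θ (a - (i : Fin d)) * (starRingEnd ℂ) (θ a))
          * (lam (a + 1) * (starRingEnd ℂ) (lam (a - (i : Fin d)))) := by ring
      _ = (θ (a + ((d - i : ℕ) : Fin d)) * (starRingEnd ℂ) (θ a))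
          * (lam (a - (i : Fin d) + ((i + 1 : ℕ) : Fin d))
            * (starRingEnd ℂ) (lam (a - (i : Fin d)))) := by
          rw [hdi]
          rw [show a + -(i : Fin d) = a - (i : Fin d) from by ring]
          rw [show ((i + 1 : ℕ) : Fin d) = (i : Fin d) + 1 from by push_cast; ring]
          rw [show a - (i : Fin d) + ((i : Fin d) + 1) = a + 1 from by ring]
      _ = _ := by rw [← rθ, ← rl]; ring
  -- main computation: entries of the product
  have main : ZΘ ^ i * ZΛ ^ j
      = ∑ k : Fin d,
          Matrix.single k (k + 1) (γ (k + 1) * (starRingEnd ℂ) (γ k)) := by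
    rw [hZΘ, hZΛ, shift_pow, shift_pow]
    ext a b
    rw [Matrix.mul_apply, sumB]
    rw [Finset.sum_eq_single (b + (j : Fin d))]
    · rw [sumA, sumA, if_pos rfl]
      have hcond : (a = b + (j : Fin d) + (i : Fin d)) ↔ (b = a + 1) := by
        rw [hjc]
        constructor <;> intro h <;> rw [h] <;> ring
      by_cases h : b = a + 1
      · rw [if_pos (hcond.mpr h), if_pos h]
        have hk := key a
        rw [← hk, h]
      · rw [if_neg (fun hc => h (hcond.mp hc)), if_neg h, zero_mul]
    · intro c _ hc
      rw [sumA, sumA, if_neg hc, mul_zero]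
    · simp
  refine ⟨main, ?_⟩
  rw [main, hZΓ]
  ext a b
  rw [Matrix.conjTranspose_apply, sumB, sumA]
  by_cases h : b = a + 1
  · rw [if_pos h, if_pos h]
    simp [mul_comm]
  · rw [if_neg h, if_neg h, star_zero]
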